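/- Let α ∈ (0,1), let k be a positive integer, and set θ = 1 − ((1−α)/2)^k. Let φ : ℝ → ℝ be continuously differentiable and monotone increasing on [θ, 1], taking values in (0,1] there with φ(1) = 1, and suppose there are constants 0 < g_4 ≤ g_3 with g_4 ≤ φ'(x) ≤ g_3 for all x ∈ [θ, 1]. Let t, s, p be positive integers with t = s + p, s = ⌈ (g_3/g_4) / φ(θ)^{2t−1} ⌉, and p = ⌈ ((g_3/g_4)·((3α−1)/2)) / ( φ(θ)^{2t−1}·((1−α²)/4) ) ⌉ if α > 1/3 and p = 0 if α ≤ 1/3. Then the closed interval [ φ(θ)^{t+1} , φ(θ)^{t−1} ] is contained in the set Γ_{α,φ} = { Π_{k=1}^{2t} φ(c_k) : c_k ∈ C_α }. -/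

import Mathlib

open scoped BigOperators
open Finset Filter

/-- The central Cantor set `C_α ⊆ [0,1]`: the set of all sums
`Σ_{n} ε_n · ((1+α)/2) · ((1−α)/2)^n` with `ε_n ∈ {0,1}`. -/
noncomputable def centralCantor (α : ℝ) : Set ℝ :=
  {x | ∃ ε : ℕ → ℝ, (∀ n, ε n = 0 ∨ ε n = 1) ∧
    x = ∑' n : ℕ, ε n * ((1 + α) / 2) * ((1 - α) / 2) ^ n}

open scoped Classical in
/-- One round of refinements at level `n`: refine coordinates `0, …, i-1` in turn. -/
noncomputable def cpInner (Φ : ℝ → ℝ) (β x : ℝ) (N : ℕ) (n : ℕ) (ℓ : Fin N → ℝ) : ℕ → Fin N → ℝ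
  | 0 => ℓ
  | (i+1) =>
    if h : i < N then
      if x ≤ ∏ j, Φ (cpInner Φ β x N n ℓ i j + β ^ (if (j : ℕ) < i + 1 then n + 1 else n)) then
        cpInner Φ β x N n ℓ i
      else Function.update (cpInner Φ β x N n ℓ i) ⟨i, h⟩
        (cpInner Φ β x N n ℓ i ⟨i, h⟩ + (1 - β) * β ^ n)
    else cpInner Φ β x N n ℓ i

/-- Left endpoints of the chosen cylinders after `n` full rounds. -/
noncomputable def cpL (Φ : ℝ → ℝ) (β x : ℝ) (N : ℕ) : ℕ → Fin N → ℝ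
  | 0 => fun _ => 0
  | (n+1) => cpInner Φ β x N n (cpL Φ β x N n) N

lemma cpInner_frozen (Φ : ℝ → ℝ) (β x : ℝ) (N n : ℕ) (ℓ : Fin N → ℝ) :
    ∀ i (j : Fin N), i ≤ (j : ℕ) → cpInner Φ β x N n ℓ i j = ℓ j := by
  intro i
  induction i with
  | zero => intro j _; rfl
  | succ i ih =>
    intro j hij
    have hij' : i ≤ (j : ℕ) := by omega
    have hne : (j : ℕ) ≠ i := by omega
    rw [cpInner]
    split_ifs with h1 h2
    · exact ih j hij'
    · rw [Function.update_of_ne (by simp [Fin.ext_iff, hne] : j ≠ ⟨i, h1⟩)]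
      exact ih j hij'
    · exact ih j hij'

lemma cpInner_incr (Φ : ℝ → ℝ) (β x : ℝ) (N n : ℕ) (ℓ : Fin N → ℝ) :
    ∀ i (j : Fin N), cpInner Φ β x N n ℓ i j = ℓ j ∨
      cpInner Φ β x N n ℓ i j = ℓ j + (1 - β) * β ^ n := by
  intro i
  induction i with
  | zero => intro j; left; rfl
  | succ i ih =>
    intro j
    rw [cpInner]
    split_ifs with h1 h2
    · exact ih j
    · by_cases hji : j = ⟨i, h1⟩
      · subst hji
        rw [Function.update_self]
        right
        rw [cpInner_frozen Φ β x N n ℓ i _ le_rfl]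
      · rw [Function.update_of_ne hji]; exact ih j
    · exact ih j

lemma prod_sub_prod_le {ι : Type*} (s : Finset ι) (f g : ι → ℝ)
    (h0 : ∀ j ∈ s, 0 ≤ f j) (hfg : ∀ j ∈ s, f j ≤ g j) (h1 : ∀ j ∈ s, g j ≤ 1) :
    ∏ j ∈ s, g j - ∏ j ∈ s, f j ≤ ∑ j ∈ s, (g j - f j) := by
  classical
  induction s using Finset.induction_on with
  | empty => simp
  | @insert a s ha ih =>
    rw [Finset.prod_insert ha, Finset.prod_insert ha, Finset.sum_insert ha]
    have h0' : ∀ j ∈ s, 0 ≤ f j := fun j hj => h0 j (mem_insert_of_mem hj)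
    have hfg' : ∀ j ∈ s, f j ≤ g j := fun j hj => hfg j (mem_insert_of_mem hj)
    have h1' : ∀ j ∈ s, g j ≤ 1 := fun j hj => h1 j (mem_insert_of_mem hj)
    have ihs := ih h0' hfg' h1'
    have hpf0 : 0 ≤ ∏ j ∈ s, f j := Finset.prod_nonneg h0'
    have hpf1 : ∏ j ∈ s, f j ≤ 1 :=
      Finset.prod_le_one h0' (fun j hj => (hfg' j hj).trans (h1' j hj))
    have hpp : ∏ j ∈ s, f j ≤ ∏ j ∈ s, g j := Finset.prod_le_prod h0' hfg'
    have hga : g a ≤ 1 := h1 a (mem_insert_self a s)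
    have hfa : 0 ≤ f a := h0 a (mem_insert_self a s)
    have hfga : f a ≤ g a := hfg a (mem_insert_self a s)
    nlinarith [mul_le_mul_of_nonneg_right hga (sub_nonneg.2 hpp)]


set_option maxHeartbeats 2000000 in
lemma cpMove (Φ : ℝ → ℝ) (β lam G₃ G₄ x : ℝ) (N : ℕ)
    (hβ0 : 0 < β) (hβ2 : β < 1/2) (hlam : 0 < lam)
    (hG₄ : 0 < G₄) (hG : G₄ ≤ G₃)
    (hmvt : ∀ u v : ℝ, 0 ≤ u → u ≤ v → v ≤ 1 →
      G₄ * (v - u) ≤ Φ v - Φ u ∧ Φ v - Φ u ≤ G₃ * (v - u))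
    (hΦ : ∀ u : ℝ, 0 ≤ u → u ≤ 1 → lam ≤ Φ u ∧ Φ u ≤ 1)
    (hkey : G₃ * (1 - 2*β) ≤ ((N:ℝ) - 1) * G₄ * β * lam)
    (n i : ℕ) (h : i < N) (ℓ : Fin N → ℝ)
    (Hbd : ∀ j : Fin N, 0 ≤ ℓ j ∧ ℓ j + β ^ (if (j:ℕ) < i then n+1 else n) ≤ 1)
    (Hup : x ≤ ∏ j, Φ (ℓ j + β ^ (if (j:ℕ) < i then n+1 else n)))
    (hxR : ¬ x ≤ ∏ j, Φ (ℓ j + β ^ (if (j:ℕ) < i + 1 then n+1 else n))) :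
    (∀ j : Fin N, 0 ≤ Function.update ℓ ⟨i,h⟩ (ℓ ⟨i,h⟩ + (1-β)*β^n) j ∧
        Function.update ℓ ⟨i,h⟩ (ℓ ⟨i,h⟩ + (1-β)*β^n) j
          + β ^ (if (j:ℕ) < i+1 then n+1 else n) ≤ 1) ∧
      (∏ j, Φ (Function.update ℓ ⟨i,h⟩ (ℓ ⟨i,h⟩ + (1-β)*β^n) j)) ≤ x ∧
      x ≤ ∏ j, Φ (Function.update ℓ ⟨i,h⟩ (ℓ ⟨i,h⟩ + (1-β)*β^n) j
          + β ^ (if (j:ℕ) < i+1 then n+1 else n)) := by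
  have hβ1 : β < 1 := by linarith
  set i₀ : Fin N := ⟨i, h⟩ with hi₀
  set ℓ' := Function.update ℓ i₀ (ℓ i₀ + (1-β)*β^n) with hℓ'
  have hps : β^(n+1) = β^n * β := pow_succ β n
  have hpn0 : (0:ℝ) ≤ β^n := pow_nonneg hβ0.le n
  have hpn10 : (0:ℝ) ≤ β^(n+1) := pow_nonneg hβ0.le (n+1)
  have hexp : ∀ j : Fin N, j ≠ i₀ →
      (if (j:ℕ) < i+1 then n+1 else n) = (if (j:ℕ) < i then n+1 else n) := by
    intro j hj
    have hne : (j:ℕ) ≠ i := by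
      intro hc; exact hj (Fin.ext (by simpa using hc))
    by_cases hji : (j:ℕ) < i
    · simp [hji, Nat.lt_succ_of_lt hji]
    · have : ¬ ((j:ℕ) < i + 1) := by omega
      simp [hji, this]
  have hi₀exp : (if (i₀:ℕ) < i then n+1 else n) = n := by simp [hi₀]
  have hi₀exp' : (if (i₀:ℕ) < i+1 then n+1 else n) = n+1 := by simp [hi₀]
  have hbdi := Hbd i₀
  rw [hi₀exp] at hbdi
  have Hbd' : ∀ j : Fin N, 0 ≤ ℓ' j ∧ ℓ' j + β ^ (if (j:ℕ) < i+1 then n+1 else n) ≤ 1 := by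
    intro j
    by_cases hj : j = i₀
    · rw [hj, hℓ', Function.update_self, hi₀exp']
      constructor
      · nlinarith [hbdi.1]
      · nlinarith [hbdi.2]
    · rw [hℓ', Function.update_of_ne hj, hexp j hj]
      exact Hbd j
  refine ⟨Hbd', ?_, ?_⟩
  · -- lower bound: new product ≤ x
    have hRlt : (∏ j, Φ (ℓ j + β ^ (if (j:ℕ) < i + 1 then n+1 else n))) < x := not_le.1 hxR
    refine le_of_lt (lt_of_le_of_lt ?_ hRlt)
    rw [← Finset.mul_prod_erase univ (fun j => Φ (ℓ' j)) (mem_univ i₀),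
        ← Finset.mul_prod_erase univ
          (fun j => Φ (ℓ j + β ^ (if (j:ℕ) < i + 1 then n+1 else n))) (mem_univ i₀)]
    have hAeq : (∏ j ∈ univ.erase i₀, Φ (ℓ' j)) = ∏ j ∈ univ.erase i₀, Φ (ℓ j) :=
      Finset.prod_congr rfl fun j hj => by
        rw [hℓ', Function.update_of_ne (Finset.ne_of_mem_erase hj)]
    rw [hAeq, hℓ', Function.update_self, hi₀exp']
    set A := ∏ j ∈ univ.erase i₀, Φ (ℓ j) with hA
    set B := ∏ j ∈ univ.erase i₀, Φ (ℓ j + β ^ (if (j:ℕ) < i + 1 then n+1 else n)) with hB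
    set u := Φ (ℓ i₀ + β^(n+1)) with hu
    set v := Φ (ℓ i₀ + (1-β)*β^n) with hv
    set δ := G₄ * β^(n+1) with hδ
    have hδ0 : 0 ≤ δ := mul_nonneg hG₄.le hpn10
    have hjfacts : ∀ j ∈ univ.erase i₀, 0 ≤ Φ (ℓ j) ∧ Φ (ℓ j) ≤ 1 ∧
        (1+δ) * Φ (ℓ j) ≤ Φ (ℓ j + β ^ (if (j:ℕ) < i + 1 then n+1 else n)) := by
      intro j hj
      have hjne := Finset.ne_of_mem_erase hj
      have hbdj := Hbd j
      have he := hexp j hjne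
      have he1 : β ^ (if (j:ℕ) < i + 1 then n+1 else n) ≤ β ^ (if (j:ℕ) < i then n+1 else n) := by
        rw [he]
      have he2 : β^(n+1) ≤ β ^ (if (j:ℕ) < i + 1 then n+1 else n) := by
        apply pow_le_pow_of_le_one hβ0.le hβ1.le
        split <;> omega
      have harg1 : ℓ j + β ^ (if (j:ℕ) < i + 1 then n+1 else n) ≤ 1 := by
        linarith [hbdj.2]
      have hΦj := hΦ (ℓ j) hbdj.1
        (by nlinarith [hbdj.2, pow_nonneg hβ0.le (if (j:ℕ) < i then n+1 else n)])
      have hm := (hmvt (ℓ j) (ℓ j + β ^ (if (j:ℕ) < i + 1 then n+1 else n)) hbdj.1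
        (by nlinarith [pow_nonneg hβ0.le (if (j:ℕ) < i + 1 then n+1 else n)]) harg1).1
      refine ⟨by linarith [hΦj.1], hΦj.2, ?_⟩
      nlinarith [mul_le_mul_of_nonneg_left he2 hG₄.le,
        mul_le_mul_of_nonneg_left hΦj.2 hδ0]
    have hA0 : 0 ≤ A := Finset.prod_nonneg fun j hj => (hjfacts j hj).1
    have hA1 : A ≤ 1 := Finset.prod_le_one (fun j hj => (hjfacts j hj).1)
      (fun j hj => (hjfacts j hj).2.1)
    have hcard : (univ.erase i₀).card = N - 1 := by
      rw [card_erase_of_mem (mem_univ _), card_univ, Fintype.card_fin]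
    have hAB : (1+δ)^(N-1) * A ≤ B := by
      have h1 : (∏ j ∈ univ.erase i₀, ((1+δ) * Φ (ℓ j))) ≤ B :=
        Finset.prod_le_prod (fun j hj => mul_nonneg (by linarith) (hjfacts j hj).1)
          (fun j hj => (hjfacts j hj).2.2)
      calc (1+δ)^(N-1) * A = ∏ j ∈ univ.erase i₀, ((1+δ) * Φ (ℓ j)) := by
            rw [Finset.prod_mul_distrib, Finset.prod_const, hcard]
        _ ≤ B := h1
    have hpow : 1 + ((N:ℝ)-1) * δ ≤ (1+δ)^(N-1) := by
      have := one_add_mul_le_pow (by linarith : (-2:ℝ) ≤ δ) (N-1)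
      rwa [Nat.cast_sub (by omega : 1 ≤ N), Nat.cast_one] at this
    have hargu0 : (0:ℝ) ≤ ℓ i₀ + β^(n+1) := by nlinarith [hbdi.1]
    have harguv : ℓ i₀ + β^(n+1) ≤ ℓ i₀ + (1-β)*β^n := by nlinarith
    have hargv1 : ℓ i₀ + (1-β)*β^n ≤ 1 := by nlinarith [hbdi.2]
    have hmu := hmvt (ℓ i₀ + β^(n+1)) (ℓ i₀ + (1-β)*β^n) hargu0 harguv hargv1
    have hvu : v ≤ u + G₃ * ((1-2*β)*β^n) := by
      have harg : (ℓ i₀ + (1-β)*β^n) - (ℓ i₀ + β^(n+1)) = (1-2*β)*β^n := by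
        rw [hps]; ring
      rw [harg] at hmu
      linarith [hmu.2]
    have hulam : lam ≤ u ∧ u ≤ 1 := hΦ _ hargu0 (by linarith)
    have hu0 : 0 ≤ u := by linarith [hulam.1]
    have hgkey : G₃ * ((1-2*β)*β^n) ≤ ((N:ℝ)-1) * δ * lam := by
      have hh := mul_le_mul_of_nonneg_right hkey hpn0
      rw [hδ, hps]; nlinarith [hh]
    have hN1 : (0:ℝ) ≤ (N:ℝ) - 1 := by
      have : (1:ℝ) ≤ (N:ℝ) := by exact_mod_cast Nat.one_le_iff_ne_zero.2 (by omega)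
      linarith
    have e1 : G₃ * ((1-2*β)*β^n) * A ≤ (((N:ℝ)-1) * δ * lam) * A :=
      mul_le_mul_of_nonneg_right hgkey hA0
    have e2 : (((N:ℝ)-1) * δ) * lam ≤ (((N:ℝ)-1) * δ) * u :=
      mul_le_mul_of_nonneg_left hulam.1 (mul_nonneg hN1 hδ0)
    have e2' : (((N:ℝ)-1) * δ * lam) * A ≤ (((N:ℝ)-1) * δ * u) * A :=
      mul_le_mul_of_nonneg_right e2 hA0
    have e3 : u * ((1 + ((N:ℝ)-1) * δ) * A) ≤ u * ((1+δ)^(N-1) * A) :=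
      mul_le_mul_of_nonneg_left (mul_le_mul_of_nonneg_right hpow hA0) hu0
    have e4 : u * ((1+δ)^(N-1) * A) ≤ u * B := mul_le_mul_of_nonneg_left hAB hu0
    have e5 : v * A ≤ (u + G₃ * ((1-2*β)*β^n)) * A := mul_le_mul_of_nonneg_right hvu hA0
    have e7 : (u + G₃ * ((1-2*β)*β^n)) * A = u*A + G₃ * ((1-2*β)*β^n) * A := by ring
    have e8 : u * ((1 + ((N:ℝ)-1)*δ) * A) = u*A + (((N:ℝ)-1) * δ * u) * A := by ring
    linarith [e1, e2', e3, e4, e5]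
  · calc x ≤ ∏ j, Φ (ℓ j + β ^ (if (j:ℕ) < i then n+1 else n)) := Hup
      _ = ∏ j, Φ (ℓ' j + β ^ (if (j:ℕ) < i+1 then n+1 else n)) := by
          apply Finset.prod_congr rfl
          intro j _
          by_cases hj : j = i₀
          · rw [hj, hℓ', Function.update_self, hi₀exp, hi₀exp']
            congr 1
            rw [hps]; ring
          · rw [hℓ', Function.update_of_ne hj, hexp j hj]


set_option maxHeartbeats 2000000 in
lemma cantorProd_main (Φ : ℝ → ℝ) (β lam G₃ G₄ x : ℝ) (N : ℕ)
    (hβ0 : 0 < β) (hβ2 : β < 1/2) (hN : 2 ≤ N) (hlam : 0 < lam)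
    (hG₄ : 0 < G₄) (hG : G₄ ≤ G₃)
    (hmvt : ∀ u v : ℝ, 0 ≤ u → u ≤ v → v ≤ 1 →
      G₄ * (v - u) ≤ Φ v - Φ u ∧ Φ v - Φ u ≤ G₃ * (v - u))
    (hΦ : ∀ u : ℝ, 0 ≤ u → u ≤ 1 → lam ≤ Φ u ∧ Φ u ≤ 1)
    (hkey : G₃ * (1 - 2*β) ≤ ((N:ℝ) - 1) * G₄ * β * lam)
    (hx1 : (∏ _j : Fin N, Φ 0) ≤ x) (hx2 : x ≤ ∏ _j : Fin N, Φ 1) :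
    ∃ ε : Fin N → ℕ → ℝ, (∀ j m, ε j m = 0 ∨ ε j m = 1) ∧
      x = ∏ j, Φ (∑' m, ε j m * (1 - β) * β ^ m) := by
  classical
  have hβ1 : β < 1 := by linarith
  set L := cpL Φ β x N with hL
  have hL0 : ∀ j : Fin N, L 0 j = 0 := fun j => rfl
  have hLs : ∀ n, L (n+1) = cpInner Φ β x N n (L n) N := fun n => rfl
  -- round invariant
  have Rinv : ∀ n, (∀ j : Fin N, 0 ≤ L n j ∧ L n j + β^n ≤ 1) ∧
      (∏ j, Φ (L n j)) ≤ x ∧ x ≤ ∏ j, Φ (L n j + β^n) := by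
    intro n
    induction n with
    | zero =>
      refine ⟨fun j => ?_, by simpa [hL0] using hx1, by simpa [hL0] using hx2⟩
      simp [hL0]
    | succ n ih =>
      have inner : ∀ i, i ≤ N →
          (∀ j : Fin N, 0 ≤ cpInner Φ β x N n (L n) i j ∧
            cpInner Φ β x N n (L n) i j + β ^ (if (j:ℕ) < i then n+1 else n) ≤ 1) ∧
          (∏ j, Φ (cpInner Φ β x N n (L n) i j)) ≤ x ∧
          x ≤ ∏ j, Φ (cpInner Φ β x N n (L n) i j + β ^ (if (j:ℕ) < i then n+1 else n)) := by
        intro i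
        induction i with
        | zero =>
          intro _
          simp only [cpInner, Nat.not_lt_zero, if_false, pow_zero]
          exact ⟨fun j => ih.1 j, ih.2.1, ih.2.2⟩
        | succ i ihi =>
          intro hiN
          have hi : i < N := by omega
          obtain ⟨ib, il, iu⟩ := ihi (by omega)
          have heq : cpInner Φ β x N n (L n) (i+1) =
              if x ≤ ∏ j, Φ (cpInner Φ β x N n (L n) i j +
                  β ^ (if (j : ℕ) < i + 1 then n + 1 else n)) then
                cpInner Φ β x N n (L n) i
              else Function.update (cpInner Φ β x N n (L n) i) ⟨i, hi⟩
                (cpInner Φ β x N n (L n) i ⟨i, hi⟩ + (1 - β) * β ^ n) := by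
            rw [cpInner, dif_pos hi]
          rw [heq]
          split_ifs with hxR
          · refine ⟨fun j => ?_, il, hxR⟩
            have hb := ib j
            have hple : β ^ (if (j:ℕ) < i+1 then n+1 else n) ≤
                β ^ (if (j:ℕ) < i then n+1 else n) := by
              apply pow_le_pow_of_le_one hβ0.le hβ1.le
              split <;> split <;> omega
            exact ⟨hb.1, by linarith [hb.2]⟩
          · exact cpMove Φ β lam G₃ G₄ x N hβ0 hβ2 hlam hG₄ hG hmvt hΦ hkey n i hi _ ib iu hxR
      have hfin := inner N le_rfl
      rw [hLs n] at *
      refine ⟨fun j => ?_, hfin.2.1, ?_⟩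
      · have := hfin.1 j
        rwa [if_pos j.isLt] at this
      · have := hfin.2.2
        calc x ≤ ∏ j, Φ (cpInner Φ β x N n (L n) N j +
              β ^ (if (j:ℕ) < N then n+1 else n)) := this
          _ = ∏ j, Φ (cpInner Φ β x N n (L n) N j + β ^ (n+1)) :=
            Finset.prod_congr rfl fun j _ => by rw [if_pos j.isLt]
  -- increments
  have hstep : ∀ n (j : Fin N), L (n+1) j = L n j ∨ L (n+1) j = L n j + (1-β)*β^n := by
    intro n j
    have := cpInner_incr Φ β x N n (L n) N j
    rwa [← hLs n] at this
  -- digits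
  set ε : Fin N → ℕ → ℝ := fun j m => if L (m+1) j = L m j then 0 else 1 with hε
  have hε01 : ∀ j m, ε j m = 0 ∨ ε j m = 1 := by
    intro j m
    by_cases h : L (m+1) j = L m j <;> simp [hε, h]
  have hε01' : ∀ j m, 0 ≤ ε j m ∧ ε j m ≤ 1 := by
    intro j m
    rcases hε01 j m with h | h <;> rw [h] <;> norm_num
  have hεd : ∀ j m, ε j m * (1-β) * β^m = L (m+1) j - L m j := by
    intro j m
    by_cases h : L (m+1) j = L m j
    · simp [hε, h]
    · have h2 := (hstep m j).resolve_left h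
      rw [hε]
      simp only [h, if_false]
      rw [h2]; ring
  have hpart : ∀ (j : Fin N) n, (∑ m ∈ Finset.range n, ε j m * (1-β) * β^m) = L n j := by
    intro j n
    induction n with
    | zero => simp [hL0]
    | succ n ihn => rw [Finset.sum_range_succ, ihn, hεd]; ring
  have hnn : ∀ (j : Fin N) m, 0 ≤ ε j m * (1-β) * β^m ∧ ε j m * (1-β) * β^m ≤ (1-β) * β^m := by
    intro j m
    have h1 := hε01' j m
    have h2 : (0:ℝ) ≤ β^m := pow_nonneg hβ0.le m
    constructor
    · apply mul_nonneg (mul_nonneg h1.1 (by linarith)) h2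
    · nlinarith [mul_le_mul_of_nonneg_right h1.2 (mul_nonneg (by linarith : (0:ℝ) ≤ 1-β) h2)]
  have hgeo : Summable (fun m : ℕ => (1-β) * β^m) :=
    (summable_geometric_of_lt_one hβ0.le hβ1).mul_left _
  have hsum : ∀ j : Fin N, Summable (fun m => ε j m * (1-β) * β^m) := fun j =>
    Summable.of_nonneg_of_le (fun m => (hnn j m).1) (fun m => (hnn j m).2) hgeo
  have htailgeo : ∀ n : ℕ, (∑' m : ℕ, (1-β) * β^(m+n)) = β^n := by
    intro n
    have h1 : ∀ m : ℕ, (1-β) * β^(m+n) = ((1-β) * β^n) * β^m := by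
      intro m; rw [pow_add]; ring
    rw [tsum_congr h1, tsum_mul_left, tsum_geometric_of_lt_one hβ0.le hβ1,
      mul_comm ((1-β) * β^n) _, ← mul_assoc, inv_mul_cancel₀ (by linarith : (1:ℝ)-β ≠ 0), one_mul]
  have hdLn : ∀ n (j : Fin N),
      L n j ≤ (∑' m, ε j m * (1-β) * β^m) ∧ (∑' m, ε j m * (1-β) * β^m) ≤ L n j + β^n := by
    intro n j
    have hsplit := Summable.sum_add_tsum_nat_add n (hsum j)
    rw [hpart j n] at hsplit
    have htail0 : 0 ≤ ∑' m, ε j (m+n) * (1-β) * β^(m+n) := tsum_nonneg fun m => (hnn j _).1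
    have htail1 : (∑' m, ε j (m+n) * (1-β) * β^(m+n)) ≤ β^n := by
      have hs2 : Summable (fun m => ε j (m+n) * (1-β) * β^(m+n)) :=
        (summable_nat_add_iff n).2 (hsum j)
      have hs3 : Summable (fun m : ℕ => (1-β) * β^(m+n)) := (summable_nat_add_iff n).2 hgeo
      calc (∑' m, ε j (m+n) * (1-β) * β^(m+n)) ≤ ∑' m : ℕ, (1-β) * β^(m+n) :=
            Summable.tsum_le_tsum (fun m => (hnn j _).2) hs2 hs3
        _ = β^n := htailgeo n
    constructor <;> linarith [hsplit, htail0, htail1]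
  have hmonoΦ : ∀ u v : ℝ, 0 ≤ u → u ≤ v → v ≤ 1 → Φ u ≤ Φ v := by
    intro u v h1 h2 h3
    have := (hmvt u v h1 h2 h3).1
    nlinarith [mul_nonneg hG₄.le (sub_nonneg.2 h2)]
  have hd01 : ∀ j : Fin N, 0 ≤ (∑' m, ε j m * (1-β) * β^m) ∧
      (∑' m, ε j m * (1-β) * β^m) ≤ 1 := by
    intro j
    have h0 := hdLn 0 j
    have hb := (Rinv 0).1 j
    rw [hL0] at h0 hb
    simp only [pow_zero] at h0 hb
    exact ⟨by linarith [h0.1], by linarith [h0.2, hb.2]⟩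
  -- squeeze
  have hbnd : ∀ n : ℕ, |x - ∏ j, Φ (∑' m, ε j m * (1-β) * β^m)| ≤ (N:ℝ) * (G₃ * β^n) := by
    intro n
    obtain ⟨hb, hlo, hup⟩ := Rinv n
    have hpn : (0:ℝ) ≤ β^n := pow_nonneg hβ0.le n
    have hargs : ∀ j : Fin N, 0 ≤ L n j ∧ L n j ≤ 1 ∧ L n j + β^n ≤ 1 := fun j =>
      ⟨(hb j).1, by linarith [(hb j).2], (hb j).2⟩
    have hlP : (∏ j, Φ (L n j)) ≤ ∏ j, Φ (∑' m, ε j m * (1-β) * β^m) := by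
      apply Finset.prod_le_prod
      · intro j _
        exact le_trans hlam.le (hΦ (L n j) (hargs j).1 (hargs j).2.1).1
      · intro j _
        exact hmonoΦ _ _ (hargs j).1 (hdLn n j).1 (hd01 j).2
    have huP : (∏ j, Φ (∑' m, ε j m * (1-β) * β^m)) ≤ ∏ j, Φ (L n j + β^n) := by
      apply Finset.prod_le_prod
      · intro j _
        exact le_trans hlam.le (hΦ _ (hd01 j).1 (hd01 j).2).1
      · intro j _
        exact hmonoΦ _ _ (hd01 j).1 (hdLn n j).2 (hargs j).2.2
    have hdiff : (∏ j, Φ (L n j + β^n)) - (∏ j, Φ (L n j)) ≤ ∑ j : Fin N, (Φ (L n j + β^n) - Φ (L n j)) := by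
      apply prod_sub_prod_le
      · intro j _; exact le_trans hlam.le (hΦ _ (hargs j).1 (hargs j).2.1).1
      · intro j _; exact hmonoΦ _ _ (hargs j).1 (by linarith [hpn]) (hargs j).2.2
      · intro j _; exact (hΦ _ (by linarith [(hargs j).1, hpn]) (hargs j).2.2).2
    have hterm : ∀ j : Fin N, Φ (L n j + β^n) - Φ (L n j) ≤ G₃ * β^n := by
      intro j
      have := (hmvt (L n j) (L n j + β^n) (hargs j).1 (by linarith) (hargs j).2.2).2
      simpa using this
    have hsumle : (∑ j : Fin N, (Φ (L n j + β^n) - Φ (L n j))) ≤ (N:ℝ) * (G₃ * β^n) := by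
      calc (∑ j : Fin N, (Φ (L n j + β^n) - Φ (L n j))) ≤ ∑ _j : Fin N, G₃ * β^n :=
            Finset.sum_le_sum fun j _ => hterm j
        _ = (N:ℝ) * (G₃ * β^n) := by rw [Finset.sum_const, card_univ, Fintype.card_fin]; simp [nsmul_eq_mul]
    rw [abs_le]
    constructor <;> nlinarith [hlP, huP, hdiff, hsumle, hlo, hup]
  have htends : Tendsto (fun n : ℕ => (N:ℝ) * (G₃ * β^n)) atTop (nhds 0) := by
    have h1 := (tendsto_pow_atTop_nhds_zero_of_lt_one hβ0.le hβ1).const_mul G₃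
    have h2 := h1.const_mul (N:ℝ)
    simpa using h2
  have habs : |x - ∏ j, Φ (∑' m, ε j m * (1-β) * β^m)| ≤ 0 :=
    ge_of_tendsto htends (Eventually.of_forall hbnd)
  have hxP : x = ∏ j, Φ (∑' m, ε j m * (1-β) * β^m) := by
    have h0 : x - (∏ j, Φ (∑' m, ε j m * (1-β) * β^m)) = 0 :=
      abs_eq_zero.1 (le_antisymm habs (abs_nonneg _))
    linarith
  exact ⟨ε, hε01, hxP⟩
set_option maxHeartbeats 2000000 in
/-- Products of `2t` values of a `C¹` monotone map `φ` with derivative bounds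
`0 < g₄ ≤ φ' ≤ g₃` on `[θ, 1]`, `θ = 1 − ((1−α)/2)^k`, contain the closed interval
`[φ(θ)^{t+1}, φ(θ)^{t−1}]`. -/
theorem products_of_C1_images (α : ℝ) (hα : α ∈ Set.Ioo (0 : ℝ) 1)
    (k : ℕ) (hk : 0 < k)
    (φ φ' : ℝ → ℝ) (g₃ g₄ : ℝ) (hg₄ : 0 < g₄) (hg : g₄ ≤ g₃)
    (hderiv : ∀ x ∈ Set.Icc (1 - ((1 - α) / 2) ^ k) 1,
      HasDerivWithinAt φ (φ' x) (Set.Icc (1 - ((1 - α) / 2) ^ k) 1) x)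
    (hcont : ContinuousOn φ' (Set.Icc (1 - ((1 - α) / 2) ^ k) 1))
    (hmono : MonotoneOn φ (Set.Icc (1 - ((1 - α) / 2) ^ k) 1))
    (hbound : ∀ x ∈ Set.Icc (1 - ((1 - α) / 2) ^ k) 1, g₄ ≤ φ' x ∧ φ' x ≤ g₃)
    (hrange : ∀ x ∈ Set.Icc (1 - ((1 - α) / 2) ^ k) 1, φ x ∈ Set.Ioc (0 : ℝ) 1)
    (hφ1 : φ 1 = 1)
    (t s p : ℕ) (ht : 0 < t) (hs : 0 < s) (htsp : t = s + p)
    (hseq : s = ⌈(g₃ / g₄) / φ (1 - ((1 - α) / 2) ^ k) ^ (2 * t - 1)⌉₊)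
    (hpeq : p = if 1 / 3 < α then
        ⌈((g₃ / g₄) * ((3 * α - 1) / 2)) /
          (φ (1 - ((1 - α) / 2) ^ k) ^ (2 * t - 1) * ((1 - α ^ 2) / 4))⌉₊
      else 0) :
    Set.Icc (φ (1 - ((1 - α) / 2) ^ k) ^ (t + 1)) (φ (1 - ((1 - α) / 2) ^ k) ^ (t - 1))
      ⊆ {x : ℝ | ∃ c : Fin (2 * t) → ℝ,
          (∀ i, c i ∈ centralCantor α) ∧ x = ∏ i, φ (c i)} := by
  obtain ⟨hα0, hα1⟩ := hα
  intro y hy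
  set β : ℝ := (1 - α) / 2 with hβdef
  set θ : ℝ := 1 - β ^ k with hθdef
  have hβ0 : 0 < β := by rw [hβdef]; linarith
  have hβ2 : β < 1/2 := by rw [hβdef]; linarith
  have hβ1 : β < 1 := by linarith
  have hBk0 : 0 < β ^ k := pow_pos hβ0 k
  have hBk1 : β ^ k ≤ β := by
    calc β ^ k ≤ β ^ 1 := pow_le_pow_of_le_one hβ0.le hβ1.le (by omega)
      _ = β := pow_one β
  have hθ1 : θ < 1 := by rw [hθdef]; linarith
  have hθ0 : 0 < θ := by rw [hθdef]; linarith
  have hθmem : θ ∈ Set.Icc θ 1 := ⟨le_rfl, hθ1.le⟩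
  set lam : ℝ := φ θ with hlamdef
  have hlam01 := hrange θ hθmem
  have hlam0 : 0 < lam := hlam01.1
  have hlam1 : lam ≤ 1 := hlam01.2
  -- mean value bounds for φ on [θ, 1]
  have hcontφ : ContinuousOn φ (Set.Icc θ 1) := fun z hz => (hderiv z hz).continuousWithinAt
  have hderivAt : ∀ z ∈ interior (Set.Icc θ 1), HasDerivAt φ (φ' z) z := by
    intro z hz
    rw [interior_Icc] at hz
    exact (hderiv z (Set.mem_Icc_of_Ioo hz)).hasDerivAt (Icc_mem_nhds hz.1 hz.2)
  have hmvtφ : ∀ U V : ℝ, U ∈ Set.Icc θ 1 → V ∈ Set.Icc θ 1 → U ≤ V →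
      g₄ * (V - U) ≤ φ V - φ U ∧ φ V - φ U ≤ g₃ * (V - U) := by
    intro U V hU hV hUV
    constructor
    · have hm : MonotoneOn (fun z => φ z - g₄ * z) (Set.Icc θ 1) := by
        apply monotoneOn_of_deriv_nonneg (convex_Icc _ _)
        · exact hcontφ.sub (continuousOn_const.mul continuousOn_id)
        · intro z hz
          have h1 : HasDerivAt (fun z => φ z - g₄ * z) (φ' z - g₄) z := by
            exact ((hderivAt z hz).sub ((hasDerivAt_id' (x := z)).const_mul g₄)).congr_deriv (by ring)
          exact h1.differentiableAt.differentiableWithinAt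
        · intro z hz
          have h1 : HasDerivAt (fun z => φ z - g₄ * z) (φ' z - g₄) z := by
            exact ((hderivAt z hz).sub ((hasDerivAt_id' (x := z)).const_mul g₄)).congr_deriv (by ring)
          rw [h1.deriv]
          rw [interior_Icc] at hz
          linarith [(hbound z (Set.mem_Icc_of_Ioo hz)).1]
      have := hm hU hV hUV
      simp only [] at this
      linarith
    · have hm : MonotoneOn (fun z => g₃ * z - φ z) (Set.Icc θ 1) := by
        apply monotoneOn_of_deriv_nonneg (convex_Icc _ _)
        · exact (continuousOn_const.mul continuousOn_id).sub hcontφ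
        · intro z hz
          have h1 : HasDerivAt (fun z => g₃ * z - φ z) (g₃ - φ' z) z := by
            exact (((hasDerivAt_id' (x := z)).const_mul g₃).sub (hderivAt z hz)).congr_deriv (by ring)
          exact h1.differentiableAt.differentiableWithinAt
        · intro z hz
          have h1 : HasDerivAt (fun z => g₃ * z - φ z) (g₃ - φ' z) z := by
            exact (((hasDerivAt_id' (x := z)).const_mul g₃).sub (hderivAt z hz)).congr_deriv (by ring)
          rw [h1.deriv]
          rw [interior_Icc] at hz
          linarith [(hbound z (Set.mem_Icc_of_Ioo hz)).2]
      have := hm hU hV hUV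
      simp only [] at this
      linarith
  -- membership of affine images
  have hmem : ∀ u : ℝ, 0 ≤ u → u ≤ 1 → θ + β ^ k * u ∈ Set.Icc θ 1 := by
    intro u h0 h1
    constructor
    · nlinarith
    · have : β ^ k * u ≤ β ^ k := by nlinarith
      rw [hθdef]; linarith
  -- abstract hypotheses
  have hmvt' : ∀ u v : ℝ, 0 ≤ u → u ≤ v → v ≤ 1 →
      (g₄ * β ^ k) * (v - u) ≤ φ (θ + β ^ k * v) - φ (θ + β ^ k * u) ∧
      φ (θ + β ^ k * v) - φ (θ + β ^ k * u) ≤ (g₃ * β ^ k) * (v - u) := by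
    intro u v h0 huv h1
    have hU := hmem u h0 (by linarith)
    have hV := hmem v (by linarith) h1
    have hUV : θ + β ^ k * u ≤ θ + β ^ k * v := by nlinarith
    have := hmvtφ _ _ hU hV hUV
    have harg : (θ + β ^ k * v) - (θ + β ^ k * u) = β ^ k * (v - u) := by ring
    rw [harg] at this
    constructor
    · calc (g₄ * β ^ k) * (v - u) = g₄ * (β ^ k * (v - u)) := by ring
        _ ≤ _ := this.1
    · calc φ (θ + β ^ k * v) - φ (θ + β ^ k * u) ≤ g₃ * (β ^ k * (v - u)) := this.2
        _ = (g₃ * β ^ k) * (v - u) := by ring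
  have hΦ' : ∀ u : ℝ, 0 ≤ u → u ≤ 1 → lam ≤ φ (θ + β ^ k * u) ∧ φ (θ + β ^ k * u) ≤ 1 := by
    intro u h0 h1
    have hU := hmem u h0 h1
    refine ⟨?_, (hrange _ hU).2⟩
    rw [hlamdef]
    exact hmono hθmem hU (by nlinarith)
  -- counting inequality
  have hpow1 : lam ^ (2*t-1) ≤ lam := by
    calc lam ^ (2*t-1) ≤ lam ^ 1 := pow_le_pow_of_le_one hlam0.le hlam1 (by omega)
      _ = lam := pow_one lam
  have hpow0 : 0 < lam ^ (2*t-1) := pow_pos hlam0 _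
  have hsge : (g₃/g₄) / lam^(2*t-1) ≤ (s:ℝ) := by rw [hseq]; exact Nat.le_ceil _
  have hF1 : g₃ ≤ (s:ℝ) * lam * g₄ := by
    have h1 : g₃/g₄ ≤ (s:ℝ) * lam^(2*t-1) := (div_le_iff₀ hpow0).1 hsge
    have h2 : (s:ℝ) * lam^(2*t-1) ≤ (s:ℝ) * lam :=
      mul_le_mul_of_nonneg_left hpow1 (Nat.cast_nonneg s)
    have h3 : g₃/g₄ ≤ (s:ℝ) * lam := by linarith
    exact (div_le_iff₀ hg₄).1 h3
  have hs1 : (1:ℝ) ≤ (s:ℝ) := by exact_mod_cast hs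
  have hcount : g₃ * α ≤ (2*(t:ℝ) - 1) * g₄ * β * lam := by
    have htr : (t:ℝ) = (s:ℝ) + (p:ℝ) := by exact_mod_cast htsp
    rw [hβdef]
    by_cases hα3 : 1/3 < α
    · rw [if_pos hα3] at hpeq
      have h1a : 0 < 1 - α^2 := by nlinarith
      have hden0 : 0 < lam^(2*t-1) * ((1-α^2)/4) := by positivity
      have hpge : ((g₃/g₄) * ((3*α-1)/2)) / (lam^(2*t-1) * ((1-α^2)/4)) ≤ (p:ℝ) := by
        rw [hpeq]; exact Nat.le_ceil _
      have hF2a : (g₃/g₄) * ((3*α-1)/2) ≤ (p:ℝ) * (lam^(2*t-1) * ((1-α^2)/4)) :=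
        (div_le_iff₀ hden0).1 hpge
      have hF2b : (p:ℝ) * (lam^(2*t-1) * ((1-α^2)/4)) ≤ (p:ℝ) * (lam * ((1-α^2)/4)) := by
        apply mul_le_mul_of_nonneg_left _ (Nat.cast_nonneg p)
        apply mul_le_mul_of_nonneg_right hpow1
        linarith
      have hF2c : (g₃/g₄) * ((3*α-1)/2) ≤ (p:ℝ) * (lam * ((1-α^2)/4)) := le_trans hF2a hF2b
      have hF2 : g₃ * ((3*α-1)/2) ≤ (p:ℝ) * (lam * ((1-α^2)/4)) * g₄ := by
        rw [div_mul_eq_mul_div] at hF2c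
        exact (div_le_iff₀ hg₄).1 hF2c
      have T1 : g₃ * (1-α^2) ≤ (s:ℝ) * lam * g₄ * (1-α^2) :=
        mul_le_mul_of_nonneg_right hF1 h1a.le
      have T3 : g₄ * lam * (1-α^2) ≤ g₃ * (1-α^2) := by
        have : g₄ * lam ≤ g₃ := by nlinarith
        nlinarith
      have T4 : (0:ℝ) ≤ g₃ * (-3*α^2 + 10*α - 3) := by
        have hg₃0 : 0 < g₃ := lt_of_lt_of_le hg₄ hg
        have : (0:ℝ) ≤ (3*α - 1) * (3 - α) := by nlinarith
        nlinarith
      have hT : 2*g₃*α*(1+α) ≤ (2*(s:ℝ) + 2*(p:ℝ) - 1) * g₄ * (1-α^2) * lam := by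
        nlinarith [T1, hF2, T3, T4]
      have h1α : (0:ℝ) < 1 + α := by linarith
      rw [htr]
      nlinarith [hT, h1α]
    · rw [if_neg hα3] at hpeq
      push_neg at hα3
      have hts : (t:ℝ) = (s:ℝ) := by rw [htr, hpeq]; norm_num
      rw [hts]
      have e1 : g₃ * α ≤ (s:ℝ) * lam * g₄ * α := mul_le_mul_of_nonneg_right hF1 hα0.le
      have e2 : (0:ℝ) ≤ (g₄ * lam) * ((s:ℝ) - 1) * (1 - 2*α) := by
        apply mul_nonneg
        apply mul_nonneg (by positivity)
        linarith
        linarith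
      have e3 : (0:ℝ) ≤ (g₄ * lam) * (1 - 3*α) := by
        apply mul_nonneg (by positivity)
        linarith
      nlinarith [e1, e2, e3]
  -- starting interval
  rw [Set.mem_Icc] at hy
  have hx1' : (∏ _j : Fin (2*t), φ (θ + β ^ k * 0)) ≤ y := by
    have h0 : θ + β ^ k * 0 = θ := by ring
    rw [h0, ← hlamdef, Finset.prod_const, card_univ, Fintype.card_fin]
    calc lam ^ (2*t) ≤ lam ^ (t+1) := pow_le_pow_of_le_one hlam0.le hlam1 (by omega)
      _ ≤ y := hy.1
  have hx2' : y ≤ ∏ _j : Fin (2*t), φ (θ + β ^ k * 1) := by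
    have h1 : θ + β ^ k * 1 = 1 := by rw [hθdef]; ring
    rw [h1, hφ1, Finset.prod_const, one_pow]
    calc y ≤ lam ^ (t-1) := hy.2
      _ ≤ 1 := pow_le_one₀ hlam0.le hlam1
  -- apply the abstract result
  obtain ⟨ε, hε01, hyeq⟩ := cantorProd_main (fun u => φ (θ + β ^ k * u)) β lam
    (g₃ * β ^ k) (g₄ * β ^ k) y (2*t) hβ0 hβ2 (by omega) hlam0
    (by positivity) (by nlinarith)
    hmvt' hΦ'
    (by
      have hcast : ((2*t : ℕ):ℝ) = 2*(t:ℝ) := by push_cast; ring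
      have h12 : 1 - 2*β = α := by rw [hβdef]; ring
      rw [hcast, h12]
      nlinarith [hcount, hBk0])
    hx1' hx2'
  -- summability helper
  have hsummable : ∀ e : ℕ → ℝ, (∀ m, e m = 0 ∨ e m = 1) →
      Summable (fun m => e m * (1-β) * β^m) := by
    intro e he
    have h1 : ∀ m, 0 ≤ e m * (1-β) * β^m := by
      intro m
      have hp := pow_nonneg hβ0.le m
      rcases he m with h | h <;> rw [h]
      · simp
      · nlinarith
    have h2 : ∀ m, e m * (1-β) * β^m ≤ (1-β) * β^m := by
      intro m
      have hp := pow_nonneg hβ0.le m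
      rcases he m with h | h <;> rw [h]
      · nlinarith
      · rw [one_mul]
    exact Summable.of_nonneg_of_le h1 h2
      ((summable_geometric_of_lt_one hβ0.le hβ1).mul_left _)
  refine ⟨fun j => θ + β ^ k * (∑' m, ε j m * (1-β) * β^m), fun j => ?_, ?_⟩
  · -- membership in the Cantor set
    refine ⟨fun m => if m < k then (1:ℝ) else ε j (m-k), ?_, ?_⟩
    · intro m
      by_cases hm : m < k
      · right
        show (if m < k then (1:ℝ) else ε j (m-k)) = 1
        rw [if_pos hm]
      · show (if m < k then (1:ℝ) else ε j (m-k)) = 0 ∨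
          (if m < k then (1:ℝ) else ε j (m-k)) = 1
        rw [if_neg hm]; exact hε01 j (m-k)
    · show θ + β ^ k * (∑' m, ε j m * (1-β) * β^m)
          = ∑' m, (if m < k then (1:ℝ) else ε j (m-k)) * ((1+α)/2) * ((1-α)/2)^m
      have ha2 : (1+α)/2 = 1 - β := by rw [hβdef]; ring
      have hb2 : (1-α)/2 = β := by rw [hβdef]
      have hcong : ∀ m : ℕ, (if m < k then (1:ℝ) else ε j (m-k)) * ((1+α)/2) * ((1-α)/2)^m
          = (if m < k then (1:ℝ) else ε j (m-k)) * (1-β) * β^m := by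
        intro m; rw [ha2, hb2]
      rw [tsum_congr hcong]
      have he' : ∀ m, (if m < k then (1:ℝ) else ε j (m-k)) = 0 ∨
          (if m < k then (1:ℝ) else ε j (m-k)) = 1 := by
        intro m
        by_cases hm : m < k
        · right; rw [if_pos hm]
        · rw [if_neg hm]; exact hε01 j (m-k)
      have hsf := hsummable _ he'
      rw [← Summable.sum_add_tsum_nat_add k hsf]
      have hhead : (∑ m ∈ Finset.range k,
          (if m < k then (1:ℝ) else ε j (m-k)) * (1-β) * β^m) = θ := by
        have h1 : ∀ m ∈ Finset.range k,
            (if m < k then (1:ℝ) else ε j (m-k)) * (1-β) * β^m = (1-β) * β^m := by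
          intro m hm
          rw [if_pos (Finset.mem_range.1 hm), one_mul]
        rw [Finset.sum_congr rfl h1, ← Finset.mul_sum, geom_sum_eq hβ1.ne k, hθdef]
        have hbne : β - 1 ≠ 0 := by intro hc; exact absurd (by linarith : β = 1) hβ1.ne
        field_simp
        ring
      have htail : (∑' m : ℕ, (if m + k < k then (1:ℝ) else ε j (m+k-k)) * (1-β) * β^(m+k))
          = β ^ k * (∑' m, ε j m * (1-β) * β^m) := by
        have h2 : ∀ m : ℕ, (if m + k < k then (1:ℝ) else ε j (m+k-k)) * (1-β) * β^(m+k)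
            = (ε j m * (1-β) * β^m) * β^k := by
          intro m
          rw [if_neg (by omega), Nat.add_sub_cancel, pow_add]
          ring
        rw [tsum_congr h2, tsum_mul_right]
        ring
      rw [hhead, htail]
  · exact hyeq
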